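/- Let (ω_{pq}) be a constant invertible skew-symmetric n×n complex matrix with inverse (η_{pq}). Suppose W : ℂ^{2n} → ℂ (in variables z_1,…,z_n, θ_1,…,θ_n) is smooth (holomorphic) and satisfies Plebański's second heavenly equations ∂²W/(∂θ_i ∂z_j) − ∂²W/(∂θ_j ∂z_i) = Σ_{p,q} η_{pq} · ∂²W/(∂θ_i ∂θ_p) · ∂²W/(∂θ_j ∂θ_q) for all i, j. Define vector fields h_i = ∂/∂z_i + Σ_{p,q} η_{pq} (∂²W/(∂θ_i ∂θ_p)) ∂/∂θ_q. Then the vector fields h_1, …, h_n pairwise commute: [h_i, h_j] = 0 for all i, j. -/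

import Mathlib

/- STATEMENT 1: If W satisfies Plebański's second heavenly equations (with
respect to the inverse η of a constant invertible skew matrix ω), then the
vector fields h_i = ∂/∂z_i + Σ_{p,q} η_{pq} (∂²W/∂θ_i∂θ_p) ∂/∂θ_q pairwise
commute.  Vector fields on ℂ^{2n} are functions E → E, with the usual bracket
[u,v](x) = Dv(x)(u x) − Du(x)(v x). -/

open scoped BigOperators

abbrev JSpace (n : ℕ) := (Fin n → ℂ) × (Fin n → ℂ)

/-- The tangent direction ∂/∂z_i. -/
def dzv (n : ℕ) (i : Fin n) : JSpace n := (Pi.single i 1, 0)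

/-- The tangent direction ∂/∂θ_i. -/
def dthv (n : ℕ) (i : Fin n) : JSpace n := (0, Pi.single i 1)

/-- Second partial ∂²W/∂θ_i∂θ_p. -/
noncomputable def Dthth {n : ℕ} (W : JSpace n → ℂ) (i p : Fin n) (x : JSpace n) : ℂ :=
  fderiv ℂ (fun y => fderiv ℂ W y (dthv n i)) x (dthv n p)

/-- Mixed partial ∂²W/∂θ_i∂z_j. -/
noncomputable def Dthz {n : ℕ} (W : JSpace n → ℂ) (i j : Fin n) (x : JSpace n) : ℂ :=
  fderiv ℂ (fun y => fderiv ℂ W y (dthv n i)) x (dzv n j)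

/-- The vector field h_i = ∂/∂z_i + Σ_{p,q} η_{pq} (∂²W/∂θ_i∂θ_p) ∂/∂θ_q. -/
noncomputable def hVF {n : ℕ} (ηM : Matrix (Fin n) (Fin n) ℂ) (W : JSpace n → ℂ)
    (i : Fin n) (x : JSpace n) : JSpace n :=
  dzv n i + (0, fun q => ∑ p, ηM p q * Dthth W i p x)

/-!
The z-components of the `h_i` are constant, so only the θ-components of `[h_i, h_j]` survive,
and the θ_q-component is `Σ_p η_{pq} (h_i(W_{θ_jθ_p}) - h_j(W_{θ_iθ_p}))`. Differentiating the
heavenly equation in θ_p and using the symmetry of third derivatives shows that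
`h_i(W_{θ_jθ_p}) = h_j(W_{θ_iθ_p})`; the terms quadratic in `W` match because `η`, the inverse of a
skew matrix, is itself skew.
-/

open scoped Matrix

theorem Matrix.transpose_eq_neg_of_mul_eq_one {m R : Type*} [Fintype m] [DecidableEq m]
    [CommRing R] {ω η : Matrix m m R} (hω : ωᵀ = -ω) (h : ω * η = 1) : ηᵀ = -η := by
  have h' : ω * -ηᵀ = 1 := by
    rw [mul_neg, ← neg_mul, ← hω, ← Matrix.transpose_mul, mul_eq_one_comm.mp h,
      Matrix.transpose_one]
  exact neg_eq_iff_eq_neg.mp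
    ((Matrix.inv_eq_right_inv h').symm.trans (Matrix.inv_eq_right_inv h))

section Calculus

variable {𝕜 E F : Type*} [NontriviallyNormedField 𝕜] [NormedAddCommGroup E] [NormedSpace 𝕜 E]
  [NormedAddCommGroup F] [NormedSpace 𝕜 F]

theorem ContDiff.fderiv_apply_const {f : E → F} (hf : ContDiff 𝕜 ⊤ f) (v : E) :
    ContDiff 𝕜 ⊤ (fun y => fderiv 𝕜 f y v) :=
  (hf.fderiv_right le_top).clm_apply contDiff_const

theorem fderiv_sum_sum_mul_mul {ι : Type*} [Fintype ι] (η : Matrix ι ι 𝕜) {a b : ι → E → 𝕜}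
    {x : E} (ha : ∀ p, DifferentiableAt 𝕜 (a p) x) (hb : ∀ q, DifferentiableAt 𝕜 (b q) x)
    (v : E) :
    fderiv 𝕜 (fun y => ∑ p, ∑ q, η p q * a p y * b q y) x v
      = ∑ p, ∑ q, η p q * (fderiv 𝕜 (a p) x v * b q x + a p x * fderiv 𝕜 (b q) x v) := by
  have hd := HasFDerivAt.fun_sum (u := Finset.univ) fun p _ =>
    HasFDerivAt.fun_sum (u := Finset.univ) fun q _ =>
      ((ha p).hasFDerivAt.const_mul (η p q)).fun_mul (hb q).hasFDerivAt
  simp only [hd.fderiv, sum_apply, add_apply, smul_apply, smul_eq_mul]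
  exact Finset.sum_congr rfl fun p _ => Finset.sum_congr rfl fun q _ => by ring

end Calculus

section Symmetry

variable {𝕜 E F : Type*} [RCLike 𝕜] [NormedAddCommGroup E] [NormedSpace 𝕜 E]
  [NormedAddCommGroup F] [NormedSpace 𝕜 F]

theorem fderiv_fderiv_apply_comm {f : E → F} {x : E} (hf : ContDiffAt 𝕜 2 f x) (a b : E) :
    fderiv 𝕜 (fun y => fderiv 𝕜 f y a) x b = fderiv 𝕜 (fun y => fderiv 𝕜 f y b) x a := by
  have hd : DifferentiableAt 𝕜 (fderiv 𝕜 f) x :=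
    (hf.fderiv_right (m := 1) le_rfl).differentiableAt one_ne_zero
  rw [fderiv_clm_apply hd (differentiableAt_const a),
    fderiv_clm_apply hd (differentiableAt_const b)]
  simpa using (hf.isSymmSndFDerivAt (by simp)).eq b a

end Symmetry

section Heavenly

variable {n : ℕ} {ηM : Matrix (Fin n) (Fin n) ℂ} {W : JSpace n → ℂ}

theorem differentiableAt_Dthth (hW : ContDiff ℂ ⊤ W) (a b : Fin n) (x : JSpace n) :
    DifferentiableAt ℂ (Dthth W a b) x :=
  ((hW.fderiv_apply_const (dthv n a)).fderiv_apply_const (dthv n b)).contDiffAt.differentiableAt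
    (by simp)

theorem fderiv_Dthth_dthv_comm (hW : ContDiff ℂ ⊤ W) (a b c : Fin n) (x : JSpace n) :
    fderiv ℂ (Dthth W a b) x (dthv n c) = fderiv ℂ (Dthth W a c) x (dthv n b) :=
  fderiv_fderiv_apply_comm ((hW.fderiv_apply_const (dthv n a)).contDiffAt.of_le le_top) _ _

theorem fderiv_Dthz_dthv (hW : ContDiff ℂ ⊤ W) (a b c : Fin n) (x : JSpace n) :
    fderiv ℂ (Dthz W a b) x (dthv n c) = fderiv ℂ (Dthth W a c) x (dzv n b) :=
  fderiv_fderiv_apply_comm ((hW.fderiv_apply_const (dthv n a)).contDiffAt.of_le le_top) _ _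

theorem zero_prod_eq_sum_smul_dthv (f : Fin n → ℂ) :
    ((0, f) : JSpace n) = ∑ r, f r • dthv n r := by
  ext <;> simp [dthv, Prod.fst_sum, Prod.snd_sum, Pi.single_apply]

theorem map_hVF (L : JSpace n →L[ℂ] ℂ) (i : Fin n) (x : JSpace n) :
    L (hVF ηM W i x)
      = L (dzv n i) + ∑ r, (∑ s, ηM s r * Dthth W i s x) * L (dthv n r) := by
  simp [hVF, zero_prod_eq_sum_smul_dthv]

theorem fderiv_hVF (hW : ContDiff ℂ ⊤ W) (j : Fin n) (x u : JSpace n) :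
    fderiv ℂ (hVF ηM W j) x u = (0, fun q => ∑ p, ηM p q * fderiv ℂ (Dthth W j p) x u) := by
  have hd : HasFDerivAt (hVF ηM W j) _ x :=
    ((hasFDerivAt_const (0 : Fin n → ℂ) x).prodMk (hasFDerivAt_pi.2 fun q =>
      HasFDerivAt.fun_sum (u := Finset.univ) fun p _ =>
        (differentiableAt_Dthth hW j p x).hasFDerivAt.const_mul (ηM p q))).const_add (dzv n j)
  simp [hd.fderiv]

theorem fderiv_heavenly (hW : ContDiff ℂ ⊤ W)
    (heavenly : ∀ (x : JSpace n) (i j : Fin n),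
      Dthz W i j x - Dthz W j i x = ∑ p, ∑ q, ηM p q * Dthth W i p x * Dthth W j q x)
    (x : JSpace n) (i j k : Fin n) :
    fderiv ℂ (Dthth W i k) x (dzv n j) - fderiv ℂ (Dthth W j k) x (dzv n i)
      = ∑ s, ∑ t, ηM s t * (fderiv ℂ (Dthth W i s) x (dthv n k) * Dthth W j t x
          + Dthth W i s x * fderiv ℂ (Dthth W j t) x (dthv n k)) := by
  have hDthz (a b : Fin n) : DifferentiableAt ℂ (Dthz W a b) x :=
    ((hW.fderiv_apply_const (dthv n a)).fderiv_apply_const (dzv n b)).contDiffAt.differentiableAt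
      (by simp)
  rw [← fderiv_sum_sum_mul_mul ηM (differentiableAt_Dthth hW i · x)
      (differentiableAt_Dthth hW j · x), ← funext (heavenly · i j),
    fderiv_fun_sub (hDthz i j) (hDthz j i), sub_apply, fderiv_Dthz_dthv hW,
    fderiv_Dthz_dthv hW]

theorem fderiv_Dthth_hVF_comm (hη : ηMᵀ = -ηM) (hW : ContDiff ℂ ⊤ W)
    (heavenly : ∀ (x : JSpace n) (i j : Fin n),
      Dthz W i j x - Dthz W j i x = ∑ p, ∑ q, ηM p q * Dthth W i p x * Dthth W j q x)
    (x : JSpace n) (i j p : Fin n) :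
    fderiv ℂ (Dthth W j p) x (hVF ηM W i x) = fderiv ℂ (Dthth W i p) x (hVF ηM W j x) := by
  have hη' (s t : Fin n) : ηM t s = -ηM s t := congrFun (congrFun hη s) t
  have h₁ : ∑ r, (∑ s, ηM s r * Dthth W i s x) * fderiv ℂ (Dthth W j p) x (dthv n r)
      = ∑ s, ∑ t, ηM s t * (Dthth W i s x * fderiv ℂ (Dthth W j t) x (dthv n p)) := by
    simp only [Finset.sum_mul]
    rw [Finset.sum_comm]
    refine Finset.sum_congr rfl fun s _ => Finset.sum_congr rfl fun t _ => ?_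
    rw [fderiv_Dthth_dthv_comm hW j p t]
    ring
  have h₂ : ∑ r, (∑ s, ηM s r * Dthth W j s x) * fderiv ℂ (Dthth W i p) x (dthv n r)
      = -∑ s, ∑ t, ηM s t * (fderiv ℂ (Dthth W i s) x (dthv n p) * Dthth W j t x) := by
    simp only [Finset.sum_mul, ← Finset.sum_neg_distrib]
    refine Finset.sum_congr rfl fun s _ => Finset.sum_congr rfl fun t _ => ?_
    rw [hη' t s, fderiv_Dthth_dthv_comm hW i p s]
    ring
  have h := fderiv_heavenly hW heavenly x i j p
  simp only [mul_add, Finset.sum_add_distrib] at h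
  rw [map_hVF, map_hVF, h₁, h₂]
  linear_combination -h

end Heavenly

theorem heavenly_implies_commuting {n : ℕ}
    (ωM ηM : Matrix (Fin n) (Fin n) ℂ)
    (hskew : ωM.transpose = -ωM) (hinv : ωM * ηM = 1)
    (W : JSpace n → ℂ) (hW : ContDiff ℂ ⊤ W)
    (heavenly : ∀ (x : JSpace n) (i j : Fin n),
      Dthz W i j x - Dthz W j i x
        = ∑ p, ∑ q, ηM p q * Dthth W i p x * Dthth W j q x) :
    ∀ (x : JSpace n) (i j : Fin n),
      fderiv ℂ (hVF ηM W j) x (hVF ηM W i x)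
        - fderiv ℂ (hVF ηM W i) x (hVF ηM W j x) = 0 := by
  intro x i j
  have hη := Matrix.transpose_eq_neg_of_mul_eq_one hskew hinv
  simp only [fderiv_hVF hW, fderiv_Dthth_hVF_comm hη hW heavenly x i j, sub_self]
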